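/- Let T be a linear map from n×n real symmetric matrices to m×m real symmetric matrices that maps positive semidefinite matrices to positive semidefinite matrices and positive definite matrices to positive definite matrices. Then for every n×n positive definite matrix P and every n×n symmetric matrix Q, the matrix T(√P·Q²·√P) − T(√P·Q·√P) · (T(P))⁻¹ · T(√P·Q·√P) is positive semidefinite. -/

import Mathlib

/-!
With `λᵢ` the eigenvalues of `Q` and `Eᵢ` its spectral projections, `√P·Qᵏ·√P = ∑ᵢ λᵢᵏ √P Eᵢ √P`
for `k = 0, 1, 2`. Applying `T` gives `T(√P Q² √P) = ∑ λᵢ² Mᵢ`, `T(√P Q √P) = ∑ λᵢ Mᵢ` and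
`T P = ∑ Mᵢ` with `Mᵢ = T(√P Eᵢ √P) ⪰ 0`. For positive semidefinite `Mᵢ`, real `cᵢ`,
`B = ∑ cᵢ Mᵢ`, `C = ∑ Mᵢ` and `K = C⁻¹B` there is the sum-of-squares identity
`∑ cᵢ² Mᵢ - B C⁻¹ B = ∑ (cᵢ I - K)ᴴ Mᵢ (cᵢ I - K)`.
-/

open Matrix

open scoped ComplexOrder in
/-- The square root of a positive semidefinite matrix, as `Matrix.PosSemidef.sqrt` was
defined in the older Mathlib (removed since). -/
noncomputable def Matrix.PosSemidef.sqrt {n : Type*} [Fintype n] [DecidableEq n]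
    {𝕜 : Type*} [RCLike 𝕜] {A : Matrix n n 𝕜} (hA : A.PosSemidef) : Matrix n n 𝕜 :=
  (hA.1.eigenvectorUnitary : Matrix n n 𝕜) *
    diagonal ((fun r : ℝ => (r : 𝕜)) ∘ (√·) ∘ hA.1.eigenvalues) *
    (star hA.1.eigenvectorUnitary : Matrix n n 𝕜)

open Unitary
open scoped ComplexOrder

namespace Matrix

lemma nonsing_inv_mul_mul_nonsing_inv {m α : Type*} [Fintype m] [DecidableEq m] [CommRing α]
    (A : Matrix m m α) : A⁻¹ * A * A⁻¹ = A⁻¹ := by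
  rcases nonsing_inv_cancel_or_zero A with ⟨h, -⟩ | h
  · rw [h, one_mul]
  · simp [h]

section SumOfSquares

variable {ι m 𝕜 : Type*} [Fintype ι] [Fintype m] [DecidableEq m] [RCLike 𝕜]

lemma sum_conjTranspose_mul_mul_smul_one_sub (M : ι → Matrix m m 𝕜) (c : ι → ℝ)
    (K : Matrix m m 𝕜) :
    ∑ i, (c i • (1 : Matrix m m 𝕜) - K)ᴴ * M i * (c i • 1 - K) =
      ∑ i, c i ^ 2 • M i - (∑ i, c i • M i) * K - Kᴴ * (∑ i, c i • M i)
        + Kᴴ * (∑ i, M i) * K := by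
  simp only [conjTranspose_sub, conjTranspose_smul, conjTranspose_one, star_trivial, sub_mul,
    mul_sub, Matrix.smul_mul, Matrix.mul_smul, one_mul, mul_one, smul_smul,
    Finset.sum_sub_distrib, Finset.mul_sum, Finset.sum_mul, sq]
  abel

theorem posSemidef_sum_sq_smul_sub_mul_inv_mul {M : ι → Matrix m m 𝕜}
    (hM : ∀ i, (M i).PosSemidef) (c : ι → ℝ) :
    (∑ i, c i ^ 2 • M i - (∑ i, c i • M i) * (∑ i, M i)⁻¹ * (∑ i, c i • M i)).PosSemidef := by
  have hB : (∑ i, c i • M i)ᴴ = ∑ i, c i • M i :=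
    isSelfAdjoint_sum _ fun i _ => (hM i).1.smul (IsSelfAdjoint.all (c i))
  have hC : (∑ i, M i)⁻¹ᴴ = (∑ i, M i)⁻¹ := (posSemidef_sum _ fun i _ => hM i).1.inv
  set B := ∑ i, c i • M i
  set C := ∑ i, M i
  have key : ∑ i, c i ^ 2 • M i - B * C⁻¹ * B =
      ∑ i, (c i • 1 - C⁻¹ * B)ᴴ * M i * (c i • 1 - C⁻¹ * B) := by
    have hBCB : B * C⁻¹ * C * (C⁻¹ * B) = B * C⁻¹ * B := by
      conv_rhs => rw [← nonsing_inv_mul_mul_nonsing_inv C]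
      simp only [Matrix.mul_assoc]
    rw [sum_conjTranspose_mul_mul_smul_one_sub, conjTranspose_mul, hB, hC, hBCB,
      Matrix.mul_assoc B]
    abel
  rw [key]
  exact posSemidef_sum _ fun i _ => (hM i).conjTranspose_mul_mul_same _

end SumOfSquares

variable {n 𝕜 : Type*} [Fintype n] [DecidableEq n] [RCLike 𝕜] {A : Matrix n n 𝕜}

namespace PosSemidef

variable (hA : A.PosSemidef)

lemma sqrt_eq_conjStarAlgAut : hA.sqrt = conjStarAlgAut 𝕜 _ hA.1.eigenvectorUnitary
    (diagonal (RCLike.ofReal ∘ (√·) ∘ hA.1.eigenvalues)) :=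
  rfl

lemma posSemidef_sqrt : hA.sqrt.PosSemidef := by
  rw [sqrt_eq_conjStarAlgAut, conjStarAlgAut_apply, star_eq_conjTranspose]
  exact (PosSemidef.diagonal fun i => by simp [Real.sqrt_nonneg]).mul_mul_conjTranspose_same _

lemma sqrt_mul_self : hA.sqrt * hA.sqrt = A := by
  rw [sqrt_eq_conjStarAlgAut, ← map_mul, diagonal_mul_diagonal]
  conv_rhs => rw [hA.1.spectral_theorem]
  congr with i
  simp [← RCLike.ofReal_mul, Real.mul_self_sqrt (hA.eigenvalues_nonneg i)]

end PosSemidef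

namespace IsHermitian

variable (hA : A.IsHermitian)

noncomputable def eigenprojection (i : n) : Matrix n n 𝕜 :=
  conjStarAlgAut 𝕜 _ hA.eigenvectorUnitary (single i i 1)

lemma posSemidef_eigenprojection (i : n) : (hA.eigenprojection i).PosSemidef := by
  rw [eigenprojection, conjStarAlgAut_apply, star_eq_conjTranspose, ← diagonal_single]
  exact (PosSemidef.diagonal fun j => by
    rcases eq_or_ne j i with rfl | h <;> simp [*]).mul_mul_conjTranspose_same _

lemma conjStarAlgAut_eigenvectorUnitary_diagonal (f : n → ℝ) :
    conjStarAlgAut 𝕜 _ hA.eigenvectorUnitary (diagonal (RCLike.ofReal ∘ f)) =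
      ∑ i, f i • hA.eigenprojection i := by
  rw [← sum_single_eq_diagonal, map_sum]
  refine Finset.sum_congr rfl fun i _ => ?_
  rw [eigenprojection, RCLike.real_smul_eq_coe_smul (K := 𝕜), ← map_smul, smul_single,
    smul_eq_mul, mul_one, Function.comp_apply]

theorem pow_eq_sum_eigenvalues_pow_smul_eigenprojection (k : ℕ) :
    A ^ k = ∑ i, hA.eigenvalues i ^ k • hA.eigenprojection i := by
  rw [← conjStarAlgAut_eigenvectorUnitary_diagonal]
  conv_lhs => rw [hA.spectral_theorem]
  rw [← map_pow, diagonal_pow]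
  congr with i
  simp

end IsHermitian

end Matrix

theorem schur_complement_key_step_general (n m : ℕ)
    (T : Matrix (Fin n) (Fin n) ℝ →ₗ[ℝ] Matrix (Fin m) (Fin m) ℝ)
    (hTpsd : ∀ X : Matrix (Fin n) (Fin n) ℝ, X.PosSemidef → (T X).PosSemidef)
    (P Q : Matrix (Fin n) (Fin n) ℝ) (hP : P.PosDef) (hQ : Q.IsSymm) :
    (T (PosSemidef.sqrt hP.posSemidef * (Q * Q) * PosSemidef.sqrt hP.posSemidef)
      - T (PosSemidef.sqrt hP.posSemidef * Q * PosSemidef.sqrt hP.posSemidef) * (T P)⁻¹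
          * T (PosSemidef.sqrt hP.posSemidef * Q * PosSemidef.sqrt hP.posSemidef)).PosSemidef := by
  have hQ : Q.IsHermitian := isHermitian_iff_isSymm.mpr hQ
  set S := PosSemidef.sqrt hP.posSemidef
  have hS : Sᴴ = S := (PosSemidef.posSemidef_sqrt _).1
  have hT (k : ℕ) : T (S * Q ^ k * S) =
      ∑ i, hQ.eigenvalues i ^ k • T (S * hQ.eigenprojection i * S) := by
    simp only [hQ.pow_eq_sum_eigenvalues_pow_smul_eigenprojection k, Finset.mul_sum,
      Finset.sum_mul, Matrix.mul_smul, Matrix.smul_mul, map_sum, map_smul]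
  have hT1 : T (S * Q * S) = ∑ i, hQ.eigenvalues i • T (S * hQ.eigenprojection i * S) := by
    simpa only [pow_one] using hT 1
  have hTP : T P = ∑ i, T (S * hQ.eigenprojection i * S) := by
    rw [← PosSemidef.sqrt_mul_self hP.posSemidef]
    simpa only [pow_zero, one_smul, Matrix.mul_one] using hT 0
  rw [← sq, hT 2, hT1, hTP]
  refine posSemidef_sum_sq_smul_sub_mul_inv_mul (fun i => hTpsd _ ?_) _
  simpa only [hS] using (hQ.posSemidef_eigenprojection i).conjTranspose_mul_mul_same S

/-- for a linear map `T` between spaces of symmetric matrices mapping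
PSD matrices to PSD matrices and PD matrices to PD matrices, and for `P` positive
definite and `Q` symmetric,
`T(√P·Q²·√P) − T(√P·Q·√P)·(T P)⁻¹·T(√P·Q·√P)` is positive semidefinite. -/
theorem schur_complement_key_step (n m : ℕ)
    (T : Matrix (Fin n) (Fin n) ℝ →ₗ[ℝ] Matrix (Fin m) (Fin m) ℝ)
    (hTsymm : ∀ X : Matrix (Fin n) (Fin n) ℝ, X.IsSymm → (T X).IsSymm)
    (hTpsd : ∀ X : Matrix (Fin n) (Fin n) ℝ, X.PosSemidef → (T X).PosSemidef)
    (hTpd : ∀ X : Matrix (Fin n) (Fin n) ℝ, X.PosDef → (T X).PosDef)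
    (P Q : Matrix (Fin n) (Fin n) ℝ) (hP : P.PosDef) (hQ : Q.IsSymm) :
    (T (PosSemidef.sqrt hP.posSemidef * (Q * Q) * PosSemidef.sqrt hP.posSemidef)
      - T (PosSemidef.sqrt hP.posSemidef * Q * PosSemidef.sqrt hP.posSemidef) * (T P)⁻¹
          * T (PosSemidef.sqrt hP.posSemidef * Q * PosSemidef.sqrt hP.posSemidef)).PosSemidef :=
  schur_complement_key_step_general n m T hTpsd P Q hP hQ
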